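/- Local complementation preserves cut-rank: for any simple graph G, any vertex v of G, and any subset X of vertices, cutrk_G(X) = cutrk_{G*v}(X). -/

import Mathlib

/-- Local complementation at a vertex `v`. -/
def localComp {V : Type} (G : SimpleGraph V) (v : V) : SimpleGraph V where
  Adj x y := x ≠ y ∧ Xor' (G.Adj x y) (G.Adj v x ∧ G.Adj v y)
  symm := by
    constructor
    rintro x y ⟨hne, h⟩
    exact ⟨hne.symm, by rwa [G.adj_comm y x, and_comm]⟩
  loopless := by constructor; rintro x ⟨hne, -⟩; exact hne rfl

/-- The cut-rank of `X`: the rank over GF(2) of the adjacency submatrix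
`A(G)[X, V \\ X]`. -/
noncomputable def cutRank {V : Type} [Fintype V] [DecidableEq V]
    (G : SimpleGraph V) (X : Finset V) : ℕ := by
  classical
  exact Matrix.rank (Matrix.of fun (i : X) (j : (Xᶜ : Finset V)) =>
    if G.Adj (i : V) (j : V) then (1 : ZMod 2) else 0)

/-!
The cut matrix of `G * v` is `M + a bᵀ`, where `M` is the cut matrix of `G` and `a`, `b` are the
indicator vectors of `N(v)` on `X` and on `V \ X`. If `v ∈ X`, then `b` is the row of `M` at `v`,
so `M + a bᵀ` arises from `M` by adding row `v` to the rows in `N(v)`; as `v ∉ N(v)`, this is an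
invertible row operation. If `v ∉ X`, then symmetrically `a` is the column of `M` at `v`.
-/

namespace Matrix

variable {R : Type*} [CommRing R] {m n : Type*}

theorem isUnit_det_one_add_vecMulVec [Fintype n] [DecidableEq n] {a b : n → R}
    (h : b ⬝ᵥ a = 0) : IsUnit (1 + vecMulVec a b).det := by
  have hsq : vecMulVec a b ^ 2 = 0 := by
    rw [sq, vecMulVec_mul_vecMulVec, h, zero_smul, vecMulVec_zero]
  exact (isUnit_iff_isUnit_det _).mp (IsNilpotent.isUnit_one_add ⟨2, hsq⟩)

theorem rank_add_vecMulVec_row [Fintype m] [DecidableEq m] [Fintype n] (M : Matrix m n R) (r : m)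
    {a : m → R} (ha : a r = 0) : (M + vecMulVec a (M r)).rank = M.rank := by
  have hfac : M + vecMulVec a (M r) = (1 + vecMulVec a (Pi.single r 1)) * M := by
    rw [Matrix.add_mul, Matrix.one_mul, vecMulVec_mul, single_one_vecMul, row]
  rw [hfac, rank_mul_eq_right_of_isUnit_det _ _
    (isUnit_det_one_add_vecMulVec (by rw [single_one_dotProduct, ha]))]

theorem rank_add_vecMulVec_col [Fintype n] [DecidableEq n] (M : Matrix m n R) (c : n)
    {b : n → R} (hb : b c = 0) : (M + vecMulVec (Mᵀ c) b).rank = M.rank := by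
  have hfac : M + vecMulVec (Mᵀ c) b = M * (1 + vecMulVec (Pi.single c 1) b) := by
    rw [Matrix.mul_add, Matrix.mul_one, mul_vecMulVec, mulVec_single_one, col]
  rw [hfac, rank_mul_eq_left_of_isUnit_det _ _
    (isUnit_det_one_add_vecMulVec (by rw [dotProduct_single_one, hb]))]

end Matrix

namespace SimpleGraph

open Matrix

variable {V : Type} (G : SimpleGraph V)

theorem adjMatrix_localComp_apply [DecidableRel G.Adj] (v : V)
    [DecidableRel (localComp G v).Adj] {x y : V} (hxy : x ≠ y) :
    (localComp G v).adjMatrix (ZMod 2) x y =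
      G.adjMatrix (ZMod 2) x y + G.adjMatrix (ZMod 2) v x * G.adjMatrix (ZMod 2) v y := by
  have hadj : (localComp G v).Adj x y ↔ ¬(G.Adj x y ↔ G.Adj v x ∧ G.Adj v y) :=
    (and_iff_right hxy).trans (xor_iff_not_iff _ _)
  by_cases h : G.Adj x y <;> by_cases hx : G.Adj v x <;> by_cases hy : G.Adj v y <;>
    simp only [h, hx, hy, and_true, and_false, iff_true, iff_false, not_true_eq_false,
      not_false_eq_true] at hadj <;>
    simp [adjMatrix_apply, hadj, h, hx, hy, CharTwo.add_self_eq_zero]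

def cutMatrix [Fintype V] [DecidableEq V] [DecidableRel G.Adj] (X : Finset V) :
    Matrix X (Xᶜ : Finset V) (ZMod 2) :=
  (G.adjMatrix (ZMod 2)).submatrix (↑) (↑)

theorem cutRank_eq_rank_cutMatrix [Fintype V] [DecidableEq V] [DecidableRel G.Adj]
    (X : Finset V) : cutRank G X = (G.cutMatrix X).rank := by
  unfold cutRank cutMatrix
  congr
  ext i j
  simp [adjMatrix_apply]

theorem cutMatrix_localComp [Fintype V] [DecidableEq V] [DecidableRel G.Adj] (v : V)
    [DecidableRel (localComp G v).Adj] (X : Finset V) :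
    (localComp G v).cutMatrix X =
      G.cutMatrix X + vecMulVec (fun i : X => G.adjMatrix (ZMod 2) v i)
        (fun j : (Xᶜ : Finset V) => G.adjMatrix (ZMod 2) v j) := by
  ext i j
  exact adjMatrix_localComp_apply G v
    (ne_of_mem_of_not_mem i.2 (Finset.mem_compl.mp j.2))

end SimpleGraph

open Matrix SimpleGraph in
theorem cutRank_localComp {V : Type} [Fintype V] [DecidableEq V]
    (G : SimpleGraph V) (v : V) (X : Finset V) :
    cutRank G X = cutRank (localComp G v) X := by
  classical
  rw [cutRank_eq_rank_cutMatrix, cutRank_eq_rank_cutMatrix, cutMatrix_localComp]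
  have hvv : G.adjMatrix (ZMod 2) v v = 0 := by simp [adjMatrix_apply]
  by_cases hv : v ∈ X
  · exact (rank_add_vecMulVec_row (G.cutMatrix X) ⟨v, hv⟩ hvv).symm
  · let c : (Xᶜ : Finset V) := ⟨v, Finset.mem_compl.2 hv⟩
    have hcol : (fun i : X => G.adjMatrix (ZMod 2) v i) = (G.cutMatrix X)ᵀ c :=
      funext fun i => G.isSymm_adjMatrix.apply i v
    rw [hcol]
    exact (rank_add_vecMulVec_col (G.cutMatrix X) c hvv).symm
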